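/- arXiv:2411.00218 — 2 statements merged into one kernel-verified Lean document; each statement's English description precedes it below -/
import Mathlib

section
/- Let M = (π₀, K, g) be a state-space model, let α_t : 𝒳 → 𝒳 be measurable maps with α₀ the identity, let M^α = (π₀, K^α, g) be the nudged model and M̄^α = (π₀, K̄^α, g^α) the alternative nudged model. Then for every t ≥ 1 and every integrable test function f : 𝒳 → ℝ: (i) ξ_t^α(f) = ξ̄_t^α(f ∘ α_t), and (ii) π_t^α(f) = π̄_t^α(f ∘ α_t). -/
open MeasureTheory ENNReal

namespace Nudging

variable {X : Type*} [MeasurableSpace X]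

/-- Total variation norm `‖μ - ν‖_TV = |sup_F (μ-ν)(F) - inf_F (μ-ν)(F)|` of the difference of
two (finite) measures. -/
noncomputable def tvDist (μ ν : Measure X) : ℝ :=
  ((⨆ (F : Set X) (_ : MeasurableSet F), (μ F - ν F)) +
   (⨆ (F : Set X) (_ : MeasurableSet F), (ν F - μ F))).toReal

/-- Supremum norm of a real-valued function. -/
noncomputable def supNorm {α : Type*} (f : α → ℝ) : ℝ := ⨆ x, |f x|

/-- The (normalised) filter measures `π_t` of a state-space model `(π0, K, g)`:
`π_0 = π0` and `π_t(f) = ξ_t(f g_t)/ξ_t(g_t)` where `ξ_t = K_t π_{t-1}`. -/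
noncomputable def filt (π0 : Measure X) (K : ℕ → X → Measure X) (g : ℕ → X → ℝ) :
    ℕ → Measure X
  | 0 => π0
  | t + 1 =>
      let ξ : Measure X := (filt π0 K g t).bind (K (t + 1))
      let ν : Measure X := ξ.withDensity fun x => ENNReal.ofReal (g (t + 1) x)
      (ν Set.univ)⁻¹ • ν

/-- The one-step-ahead predictive measure `ξ_t = K_t π_{t-1}` (for `t ≥ 1`). -/
noncomputable def pred (π0 : Measure X) (K : ℕ → X → Measure X) (g : ℕ → X → ℝ)
    (t : ℕ) : Measure X :=
  (filt π0 K g (t - 1)).bind (K t)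

/-- The Bayesian evidence (marginal likelihood) `p_T(y_{1:T}|M) = ∏_{t=1}^T ξ_t(g_t)`. -/
noncomputable def evidence (π0 : Measure X) (K : ℕ → X → Measure X) (g : ℕ → X → ℝ)
    (T : ℕ) : ℝ :=
  ∏ t ∈ Finset.Icc 1 T, ∫ x, g t x ∂(pred π0 K g t)

/-- The nudged kernel `K_t^α(x,·)`: the pushforward of `K_t(x,·)` under the map `a t`. -/
noncomputable def nudged (K : ℕ → X → Measure X) (a : ℕ → X → X) : ℕ → X → Measure X :=
  fun t x => (K t x).map (a t)

/-- The alternative nudged kernel `K̄_t^α(x,·) := K_t(α_{t-1}(x), ·)`. -/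
noncomputable def altKernel (K : ℕ → X → Measure X) (a : ℕ → X → X) : ℕ → X → Measure X :=
  fun t x => K t (a (t - 1) x)

/-- The modified likelihoods `g_t^α := g_t ∘ α_t` of the alternative nudged model. -/
def altG (g : ℕ → X → ℝ) (a : ℕ → X → X) : ℕ → X → ℝ := fun t x => g t (a t x)

/-- Dobrushin (induced) norm of a Markov kernel:
`‖K‖ = sup_{x,x'} ‖K(x,·) - K(x',·)‖_TV`. -/
noncomputable def dobNorm (K : X → Measure X) : ℝ :=
  ⨆ p : X × X, tvDist (K p.1) (K p.2)

/-!
Pushing a kernel's output forward by `α_t` is the same as pulling the likelihood `g_t` back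
along `α_t`, and the nudge of step `t - 1` can be moved from the output of the previous filter to
the input of the next kernel. Hence, by induction on `t`, the filter and the predictive measure of
`M^α` are the pushforwards under `α_t` of those of `M̄^α`; the change of variables formula for
`Measure.map` turns this into the claimed identities for integrals.
-/

section MeasureLemmas

variable {α β γ : Type*} [MeasurableSpace α] [MeasurableSpace β] [MeasurableSpace γ]

theorem map_bind_eq_bind_comp (μ : Measure α) {h : α → β} (hh : Measurable h)
    {κ : β → Measure γ} (hκ : Measurable κ) :
    (μ.map h).bind κ = μ.bind (κ ∘ h) := by
  have hdirac : Measurable fun x => Measure.dirac (h x) := Measure.measurable_dirac.comp hh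
  rw [← Measure.bind_dirac_eq_map μ hh, Measure.bind_bind hdirac.aemeasurable hκ.aemeasurable]
  simp only [Measure.dirac_bind hκ]
  rfl

theorem map_bind_eq_bind_map (μ : Measure α) {κ : α → Measure β} (hκ : Measurable κ)
    {h : β → γ} (hh : Measurable h) :
    (μ.bind κ).map h = μ.bind fun x => (κ x).map h := by
  have hdirac : Measurable fun y => Measure.dirac (h y) := Measure.measurable_dirac.comp hh
  rw [← Measure.bind_dirac_eq_map _ hh, Measure.bind_bind hκ.aemeasurable hdirac.aemeasurable]
  simp only [Measure.bind_dirac_eq_map _ hh]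

theorem withDensity_map_eq_map_withDensity (μ : Measure α) {h : α → β} (hh : Measurable h)
    {w : β → ℝ≥0∞} (hw : Measurable w) :
    (μ.map h).withDensity w = (μ.withDensity (w ∘ h)).map h := by
  ext s hs
  rw [withDensity_apply _ hs, setLIntegral_map hs hw hh, Measure.map_apply hh hs,
    withDensity_apply _ (hh hs)]
  rfl

noncomputable def bayesUpdate (ξ : Measure α) (w : α → ℝ≥0∞) : Measure α :=
  (ξ.withDensity w Set.univ)⁻¹ • ξ.withDensity w

theorem bayesUpdate_map (ξ : Measure α) {h : α → β} (hh : Measurable h)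
    {w : β → ℝ≥0∞} (hw : Measurable w) :
    bayesUpdate (ξ.map h) w = (bayesUpdate ξ (w ∘ h)).map h := by
  rw [bayesUpdate, bayesUpdate, withDensity_map_eq_map_withDensity ξ hh hw,
    Measure.map_apply hh MeasurableSet.univ, Set.preimage_univ, Measure.map_smul]

end MeasureLemmas

theorem filt_succ (π0 : Measure X) (K : ℕ → X → Measure X) (g : ℕ → X → ℝ) (t : ℕ) :
    filt π0 K g (t + 1) =
      bayesUpdate (pred π0 K g (t + 1)) fun x => ENNReal.ofReal (g (t + 1) x) :=
  rfl

section Correspondence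

variable {K : ℕ → X → Measure X} (hK : ∀ t, Measurable (K t))
  {a : ℕ → X → X} (ha : ∀ t, Measurable (a t))
include hK ha

theorem map_bind_nudged (μ : Measure X) (t : ℕ) :
    (μ.map (a (t - 1))).bind (nudged K a t) = (μ.bind (altKernel K a t)).map (a t) := by
  have hnudged : Measurable (nudged K a t) := (Measure.measurable_map _ (ha t)).comp (hK t)
  have halt : Measurable (altKernel K a t) := (hK t).comp (ha _)
  rw [map_bind_eq_bind_comp μ (ha _) hnudged, map_bind_eq_bind_map μ halt (ha t)]
  rfl

variable (π0 : Measure X) {g : ℕ → X → ℝ}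

theorem pred_nudged_eq_map_of_filt {t : ℕ}
    (hfilt : filt π0 (nudged K a) g (t - 1) =
      (filt π0 (altKernel K a) (altG g a) (t - 1)).map (a (t - 1))) :
    pred π0 (nudged K a) g t = (pred π0 (altKernel K a) (altG g a) t).map (a t) := by
  rw [pred, pred, hfilt, map_bind_nudged hK ha]

variable (hg : ∀ t, Measurable (g t)) (ha0 : a 0 = id)
include hg ha0

theorem filt_nudged_eq_map (t : ℕ) :
    filt π0 (nudged K a) g t = (filt π0 (altKernel K a) (altG g a) t).map (a t) := by
  induction t with
  | zero => simp [filt, ha0]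
  | succ t ih =>
    rw [filt_succ, filt_succ, pred_nudged_eq_map_of_filt hK ha π0 ih,
      bayesUpdate_map _ (ha _) (hg _).ennreal_ofReal]
    rfl

theorem pred_nudged_eq_map (t : ℕ) :
    pred π0 (nudged K a) g t = (pred π0 (altKernel K a) (altG g a) t).map (a t) :=
  pred_nudged_eq_map_of_filt hK ha π0 (filt_nudged_eq_map hK ha π0 hg ha0 _)

end Correspondence

theorem nudged_alt_correspondence_general
    {X : Type*} [MeasurableSpace X]
    (π0 : Measure X)
    (K : ℕ → X → Measure X)
    (hKmeas : ∀ t, Measurable (K t))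
    (g : ℕ → X → ℝ)
    (hgmeas : ∀ t, Measurable (g t))
    (a : ℕ → X → X) (hameas : ∀ t, Measurable (a t)) (ha0 : a 0 = fun x => x)
    (t : ℕ)
    (f : X → ℝ) (hfmeas : Measurable f) :
    (∫ x, f x ∂(pred π0 (nudged K a) g t) =
        ∫ x, f (a t x) ∂(pred π0 (altKernel K a) (altG g a) t)) ∧
    (∫ x, f x ∂(filt π0 (nudged K a) g t) =
        ∫ x, f (a t x) ∂(filt π0 (altKernel K a) (altG g a) t)) := by
  constructor
  · rw [pred_nudged_eq_map hKmeas hameas π0 hgmeas ha0,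
      integral_map (hameas t).aemeasurable hfmeas.aestronglyMeasurable]
  · rw [filt_nudged_eq_map hKmeas hameas π0 hgmeas ha0,
      integral_map (hameas t).aemeasurable hfmeas.aestronglyMeasurable]

/-- **Lemma (correspondence between the nudged and the alternative nudged model).**
Let `M^α = (π0, K^α, g)` be the nudged model and `M̄^α = (π0, K̄^α, g^α)` the
alternative nudged model (with `α₀` the identity).  Then for every `t ≥ 1` and every
integrable test function `f`: `ξ_t^α(f) = ξ̄_t^α(f ∘ α_t)` and
`π_t^α(f) = π̄_t^α(f ∘ α_t)`. -/
theorem nudged_alt_correspondence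
    {X : Type*} [MeasurableSpace X]
    (π0 : Measure X) (hπ0 : IsProbabilityMeasure π0)
    (K : ℕ → X → Measure X)
    (hKmeas : ∀ t, Measurable (K t))
    (hKprob : ∀ t x, IsProbabilityMeasure (K t x))
    (g : ℕ → X → ℝ)
    (hg0 : ∀ t x, 0 ≤ g t x)
    (hgmeas : ∀ t, Measurable (g t))
    (hgbdd : ∀ t, ∃ C : ℝ, ∀ x, g t x ≤ C)
    (a : ℕ → X → X) (hameas : ∀ t, Measurable (a t)) (ha0 : a 0 = fun x => x)
    (t : ℕ) (ht : 1 ≤ t)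
    (f : X → ℝ) (hfmeas : Measurable f)
    (hfint : Integrable f (pred π0 (nudged K a) g t)) :
    (∫ x, f x ∂(pred π0 (nudged K a) g t) =
        ∫ x, f (a t x) ∂(pred π0 (altKernel K a) (altG g a) t)) ∧
    (∫ x, f x ∂(filt π0 (nudged K a) g t) =
        ∫ x, f (a t x) ∂(filt π0 (altKernel K a) (altG g a) t)) :=
  nudged_alt_correspondence_general π0 K hKmeas g hgmeas a hameas ha0 t f hfmeas

end Nudging
end

section
/- Let ξ_t, π_t be the predictive measures and filters of a state-space model M = (π₀, K, g), let {α_t} be parametric nudging transformations, and let ξ̄_t^α, π̄_t^α be the predictive measures and filters of the alternative nudged model M̄^α. If ξ_t(g_t) ≤ ξ̄_t^α(g_t^α), then ‖ξ_{t+1} − ξ̄_{t+1}^α‖_TV ≤ b_t ‖ξ_t − ξ̄_t^α‖_TV + a_t Δ_{g_t}(γ) + Δ_{K_{t+1}}(γ), where a_t = ‖K_{t+1}‖_{𝒟_𝒳} / ξ_t(g_t), b_t = a_t ‖g_t‖_∞, Δ_{g_t}(γ) = ∫_𝒳 [g_t(α_t(x,γ)) − g_t(x)] ξ_t(dx), and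 Δ_{K_{t+1}}(γ) = ∫_𝒳 ‖K_{t+1}(x,·) − K_{t+1}(α_t(x,γ),·)‖_TV π_t(dx). -/
/-!
With `π = π_t`, `π̄ = π̄_t^α` and `K̄(x) = K_{t+1}(α_t(x, γ))`, write
`ξ_{t+1} - ξ̄_{t+1}^α = π (K_{t+1} - K̄) + (π - π̄) K̄`. The first term is bounded by the
kernel distance integrated against `π`, the second by Dobrushin's contraction with coefficient
`‖K_{t+1}‖_𝒟 / 2`. Finally `π - π̄` is controlled by normalising both filters with the smaller
evidence `ξ_t(g_t)`: this splits the error into a change of measure from `ξ̄_t^α` to `ξ_t` for the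
bounded likelihood `g_t^α`, and the increment `g_t^α - g_t` integrated against `ξ_t`.
-/

open MeasureTheory ENNReal

namespace Nudging

variable {X : Type*} [MeasurableSpace X]

/-- The nudging maps obtained from a parametric family `α` and a sequence of nudging
parameters `γseq` (with `α₀` the identity). -/
noncomputable def aOf {X : Type*} (α : ℕ → X → ℝ → X) (γseq : ℕ → ℝ) : ℕ → X → X :=
  fun t x => if t = 0 then x else α t x (γseq t)

noncomputable def supDiff (μ ν : Measure X) : ℝ≥0∞ :=
  ⨆ (F : Set X) (_ : MeasurableSet F), (μ F - ν F)

lemma tvDist_eq_toReal_supDiff_add (μ ν : Measure X) :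
    tvDist μ ν = (supDiff μ ν + supDiff ν μ).toReal := rfl

lemma le_supDiff {μ ν : Measure X} {F : Set X} (hF : MeasurableSet F) :
    μ F - ν F ≤ supDiff μ ν :=
  le_iSup₂ (f := fun (F : Set X) (_ : MeasurableSet F) => μ F - ν F) F hF

lemma supDiff_le {μ ν : Measure X} {c : ℝ≥0∞} (h : ∀ F, MeasurableSet F → μ F - ν F ≤ c) :
    supDiff μ ν ≤ c :=
  iSup₂_le h

lemma supDiff_ne_top (μ ν : Measure X) [IsProbabilityMeasure μ] : supDiff μ ν ≠ ∞ :=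
  ne_top_of_le_ne_top one_ne_top (supDiff_le fun _ _ => tsub_le_self.trans prob_le_one)

lemma toReal_supDiff_le (μ ν : Measure X) [IsProbabilityMeasure μ] :
    (supDiff μ ν).toReal ≤ 1 :=
  ENNReal.toReal_le_of_le_ofReal zero_le_one <| ENNReal.ofReal_one ▸
    supDiff_le fun _ _ => tsub_le_self.trans prob_le_one

lemma measureReal_sub_le_toReal_supDiff (μ ν : Measure X) [IsFiniteMeasure ν]
    [IsProbabilityMeasure μ] {F : Set X} (hF : MeasurableSet F) :
    μ.real F - ν.real F ≤ (supDiff μ ν).toReal :=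
  (ENNReal.le_toReal_sub (measure_ne_top ν F)).trans <|
    ENNReal.toReal_mono (supDiff_ne_top μ ν) (le_supDiff hF)

lemma toReal_supDiff_le_of_forall {μ ν : Measure X} [IsFiniteMeasure μ] [IsFiniteMeasure ν]
    {c : ℝ} (hc : 0 ≤ c) (h : ∀ F, MeasurableSet F → μ.real F - ν.real F ≤ c) :
    (supDiff μ ν).toReal ≤ c := by
  refine ENNReal.toReal_le_of_le_ofReal hc (supDiff_le fun F hF => ?_)
  rw [← ENNReal.ofReal_toReal (measure_ne_top μ F), ← ENNReal.ofReal_toReal (measure_ne_top ν F),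
    ← ENNReal.ofReal_sub _ ENNReal.toReal_nonneg]
  exact ENNReal.ofReal_le_ofReal (h F hF)

/-- For probability measures the excess of `μ` over `ν` on `F` is the excess of `ν` over `μ`
on `Fᶜ`. -/
lemma supDiff_comm (μ ν : Measure X) [IsProbabilityMeasure μ] [IsProbabilityMeasure ν] :
    supDiff μ ν = supDiff ν μ := by
  suffices ∀ (μ ν : Measure X) [IsProbabilityMeasure μ] [IsProbabilityMeasure ν],
      (supDiff μ ν).toReal ≤ (supDiff ν μ).toReal by
    exact (ENNReal.toReal_eq_toReal_iff' (supDiff_ne_top μ ν) (supDiff_ne_top ν μ)).1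
      (le_antisymm (this μ ν) (this ν μ))
  intro μ ν _ _
  refine toReal_supDiff_le_of_forall ENNReal.toReal_nonneg fun F hF => ?_
  have := measureReal_sub_le_toReal_supDiff ν μ hF.compl
  rw [probReal_compl_eq_one_sub hF, probReal_compl_eq_one_sub hF] at this
  linarith

lemma tvDist_eq_two_mul (μ ν : Measure X) [IsProbabilityMeasure μ] [IsProbabilityMeasure ν] :
    tvDist μ ν = 2 * (supDiff μ ν).toReal := by
  rw [tvDist_eq_toReal_supDiff_add, ← supDiff_comm μ ν,
    ENNReal.toReal_add (supDiff_ne_top μ ν) (supDiff_ne_top μ ν)]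
  ring

lemma tvDist_comm (μ ν : Measure X) : tvDist μ ν = tvDist ν μ := by
  rw [tvDist_eq_toReal_supDiff_add, tvDist_eq_toReal_supDiff_add, add_comm]

lemma tvDist_nonneg (μ ν : Measure X) : 0 ≤ tvDist μ ν := ENNReal.toReal_nonneg

lemma tvDist_le_two (μ ν : Measure X) [IsProbabilityMeasure μ] [IsProbabilityMeasure ν] :
    tvDist μ ν ≤ 2 := by
  rw [tvDist_eq_two_mul]
  linarith [toReal_supDiff_le μ ν]

lemma measureReal_sub_le_half_tvDist (μ ν : Measure X) [IsProbabilityMeasure μ]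
    [IsProbabilityMeasure ν] {F : Set X} (hF : MeasurableSet F) :
    μ.real F - ν.real F ≤ tvDist μ ν / 2 := by
  rw [tvDist_eq_two_mul]
  linarith [measureReal_sub_le_toReal_supDiff μ ν hF]

lemma tvDist_le_of_forall_measureReal_sub_le {μ ν : Measure X} [IsProbabilityMeasure μ]
    [IsProbabilityMeasure ν] {c : ℝ} (h : ∀ F, MeasurableSet F → μ.real F - ν.real F ≤ c) :
    tvDist μ ν ≤ 2 * c := by
  have hc : 0 ≤ c := by simpa using h ∅ MeasurableSet.empty
  rw [tvDist_eq_two_mul]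
  linarith [toReal_supDiff_le_of_forall hc h]

lemma tvDist_triangle (μ ν ρ : Measure X) [IsProbabilityMeasure μ] [IsProbabilityMeasure ν]
    [IsProbabilityMeasure ρ] : tvDist μ ρ ≤ tvDist μ ν + tvDist ν ρ := by
  have h := tvDist_le_of_forall_measureReal_sub_le (μ := μ) (ν := ρ)
    (c := (tvDist μ ν + tvDist ν ρ) / 2) fun F hF => by
      linarith [measureReal_sub_le_half_tvDist μ ν hF, measureReal_sub_le_half_tvDist ν ρ hF]
  linarith

section Measurability

variable [MeasurableSpace.CountablyGenerated X]

local notation "𝒜" => generateSetAlgebra (MeasurableSpace.countableGeneratingSet X)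

lemma measurableSet_of_mem_generateSetAlgebra {s : Set X} (hs : s ∈ 𝒜) : MeasurableSet s :=
  IsSetAlgebra.generateSetAlgebra_subset (ℬ := {s : Set X | MeasurableSet s})
    (fun _ hu => MeasurableSpace.measurableSet_countableGeneratingSet hu)
    ⟨.empty, fun _ h => h.compl, fun _ _ h₁ h₂ => h₁.union h₂⟩ hs

/-- The countable algebra `𝒜` is dense for the finite measure `μ + ν`, so every measurable set
is approximated by a member of `𝒜`. -/
lemma supDiff_eq_iSup_generateSetAlgebra (μ ν : Measure X) [IsFiniteMeasure μ]
    [IsFiniteMeasure ν] : supDiff μ ν = ⨆ s : 𝒜, (μ s - ν s) := by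
  have hdense : (μ + ν).MeasureDense 𝒜 :=
    Measure.MeasureDense.of_generateFrom_isSetAlgebra_finite (μ + ν)
      isSetAlgebra_generateSetAlgebra (by
        rw [generateFrom_generateSetAlgebra_eq,
          MeasurableSpace.generateFrom_countableGeneratingSet])
  refine le_antisymm (supDiff_le fun F hF => ?_)
    (iSup_le fun s => le_supDiff (measurableSet_of_mem_generateSetAlgebra s.2))
  refine ENNReal.le_of_forall_pos_le_add fun ε hε _ => ?_
  obtain ⟨s, hs, hFs⟩ := hdense.approx F hF (measure_ne_top _ _) ε (by exact_mod_cast hε)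
  have hμ : μ F ≤ μ s + μ (symmDiff F s) :=
    (measure_mono fun x hx => by by_cases hxs : x ∈ s <;> simp [symmDiff, hx, hxs]).trans
      (measure_union_le _ _)
  have hν : ν s ≤ ν F + ν (symmDiff F s) :=
    (measure_mono fun x hx => by by_cases hxF : x ∈ F <;> simp [symmDiff, hx, hxF]).trans
      (measure_union_le _ _)
  calc μ F - ν F ≤ (μ s - ν s) + (μ + ν) (symmDiff F s) := by
        rw [tsub_le_iff_right, Measure.add_apply]
        calc μ F ≤ (μ s - ν s) + ν s + μ (symmDiff F s) := hμ.trans (by gcongr; exact le_tsub_add)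
          _ ≤ (μ s - ν s) + (ν F + ν (symmDiff F s)) + μ (symmDiff F s) := by gcongr
          _ = _ := by ring
    _ ≤ (⨆ s : 𝒜, (μ s - ν s)) + ε := by
        gcongr
        · exact le_iSup (fun s : 𝒜 => μ s - ν s) ⟨s, hs⟩
        · exact hFs.le.trans_eq (by simp)

variable {Y : Type*} [MeasurableSpace Y] {κ η : Y → Measure X}

lemma measurable_supDiff (hκ : Measurable κ) (hη : Measurable η) [∀ y, IsFiniteMeasure (κ y)]
    [∀ y, IsFiniteMeasure (η y)] : Measurable fun y => supDiff (κ y) (η y) := by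
  have : Countable 𝒜 := (countable_generateSetAlgebra
    MeasurableSpace.countable_countableGeneratingSet).to_subtype
  simp_rw [supDiff_eq_iSup_generateSetAlgebra]
  refine Measurable.iSup fun s => Measurable.sub ?_ ?_
  · exact (Measure.measurable_coe (measurableSet_of_mem_generateSetAlgebra s.2)).comp hκ
  · exact (Measure.measurable_coe (measurableSet_of_mem_generateSetAlgebra s.2)).comp hη

lemma measurable_tvDist (hκ : Measurable κ) (hη : Measurable η) [∀ y, IsFiniteMeasure (κ y)]
    [∀ y, IsFiniteMeasure (η y)] : Measurable fun y => tvDist (κ y) (η y) :=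
  ((measurable_supDiff hκ hη).add (measurable_supDiff hη hκ)).ennreal_toReal

end Measurability

section IntegralBounds

variable {μ ν : Measure X} [IsProbabilityMeasure μ] [IsProbabilityMeasure ν] {f : X → ℝ}

lemma integral_sub_integral_le_mul_half_tvDist {M : ℝ} (hf : Measurable f)
    (hf0 : ∀ x, 0 ≤ f x) (hfM : ∀ x, f x ≤ M) :
    ∫ x, f x ∂μ - ∫ x, f x ∂ν ≤ M * (tvDist μ ν / 2) := by
  have hM : 0 ≤ M := by
    obtain ⟨x⟩ := nonempty_of_isProbabilityMeasure μ
    exact (hf0 x).trans (hfM x)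
  have hfi : ∀ ρ : Measure X, IsFiniteMeasure ρ → Integrable f ρ := fun ρ _ =>
    .of_bound hf.aestronglyMeasurable M (.of_forall fun x => by
      rw [Real.norm_of_nonneg (hf0 x)]; exact hfM x)
  have hcake : ∀ ρ : Measure X, IsProbabilityMeasure ρ →
      ∫ x, f x ∂ρ = ∫ t in Set.Ioc 0 M, ρ.real {x | t ≤ f x} := fun ρ _ =>
    (hfi ρ inferInstance).integral_eq_integral_Ioc_meas_le (.of_forall hf0) (.of_forall hfM)
  have hlevel : ∀ ρ : Measure X, IsProbabilityMeasure ρ →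
      IntegrableOn (fun t => ρ.real {x | t ≤ f x}) (Set.Ioc 0 M) := by
    intro ρ _
    have hanti : Antitone fun t => ρ.real {x | t ≤ f x} := fun s t hst =>
      measureReal_mono (fun x (hx : t ≤ f x) => hst.trans hx)
    exact (hanti.antitoneOn _ |>.integrableOn_isCompact isCompact_Icc).mono_set
      Set.Ioc_subset_Icc_self
  rw [hcake μ inferInstance, hcake ν inferInstance,
    ← integral_sub (hlevel μ inferInstance) (hlevel ν inferInstance)]
  calc ∫ t in Set.Ioc 0 M, (μ.real {x | t ≤ f x} - ν.real {x | t ≤ f x})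
      ≤ ∫ _ in Set.Ioc 0 M, tvDist μ ν / 2 :=
        setIntegral_mono_on ((hlevel μ inferInstance).sub (hlevel ν inferInstance))
          (integrableOn_const (by simp)) measurableSet_Ioc
          fun t _ => measureReal_sub_le_half_tvDist μ ν (hf measurableSet_Ici)
    _ = M * (tvDist μ ν / 2) := by simp [hM]

lemma integral_sub_integral_le_of_oscillation {c : ℝ} (hf : Measurable f)
    (hbdd : BddBelow (Set.range f)) (hosc : ∀ x y, f x - f y ≤ c) :
    ∫ x, f x ∂μ - ∫ x, f x ∂ν ≤ c * (tvDist μ ν / 2) := by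
  have := nonempty_of_isProbabilityMeasure μ
  set m := ⨅ x, f x
  have hm : ∀ x, m ≤ f x := ciInf_le hbdd
  have hfm : ∀ x, f x - m ≤ c := fun x => by
    have : f x - c ≤ m := le_ciInf fun y => by linarith [hosc x y]
    linarith
  have hfi : ∀ ρ : Measure X, IsFiniteMeasure ρ → Integrable f ρ := fun ρ _ => by
    have : Integrable (fun x => f x - m) ρ :=
      .of_bound (hf.sub measurable_const).aestronglyMeasurable c (.of_forall fun x => by
        rw [Real.norm_of_nonneg (sub_nonneg.2 (hm x))]; exact hfm x)
    simpa [sub_eq_add_neg, integrable_add_const_iff] using this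
  have h := integral_sub_integral_le_mul_half_tvDist (μ := μ) (ν := ν) (f := fun x => f x - m)
    (hf.sub measurable_const) (fun x => sub_nonneg.2 (hm x)) hfm
  rw [integral_sub (hfi μ inferInstance) (integrable_const m),
    integral_sub (hfi ν inferInstance) (integrable_const m)] at h
  simpa using h

end IntegralBounds

section Bind

variable {Y : Type*} [MeasurableSpace Y] {κ η : X → Measure Y}

lemma measureReal_bind (μ : Measure X) (hκ : Measurable κ) [∀ x, IsFiniteMeasure (κ x)]
    {F : Set Y} (hF : MeasurableSet F) : (μ.bind κ).real F = ∫ x, (κ x).real F ∂μ := by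
  rw [measureReal_def, Measure.bind_apply hF hκ.aemeasurable]
  exact (integral_toReal ((Measure.measurable_coe hF).comp hκ).aemeasurable
    (.of_forall fun x => measure_lt_top (κ x) F)).symm

lemma isProbabilityMeasure_bind (μ : Measure X) [IsProbabilityMeasure μ] (hκ : Measurable κ)
    [∀ x, IsProbabilityMeasure (κ x)] : IsProbabilityMeasure (μ.bind κ) :=
  ⟨by simp [Measure.bind_apply .univ hκ.aemeasurable]⟩

lemma integrable_measureReal_apply (μ : Measure X) [IsFiniteMeasure μ] (hκ : Measurable κ)
    [∀ x, IsProbabilityMeasure (κ x)] {F : Set Y} (hF : MeasurableSet F) :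
    Integrable (fun x => (κ x).real F) μ :=
  .of_bound ((Measure.measurable_coe hF).comp hκ).ennreal_toReal.aestronglyMeasurable 1
    (.of_forall fun x => by rw [Real.norm_of_nonneg measureReal_nonneg]; exact measureReal_le_one)

lemma tvDist_bind_bind_le_integral [MeasurableSpace.CountablyGenerated Y] (μ : Measure X)
    [IsProbabilityMeasure μ] (hκ : Measurable κ) (hη : Measurable η)
    [∀ x, IsProbabilityMeasure (κ x)] [∀ x, IsProbabilityMeasure (η x)] :
    tvDist (μ.bind κ) (μ.bind η) ≤ ∫ x, tvDist (κ x) (η x) ∂μ := by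
  have := isProbabilityMeasure_bind μ hκ
  have := isProbabilityMeasure_bind μ hη
  have htv : Integrable (fun x => tvDist (κ x) (η x)) μ :=
    .of_bound (measurable_tvDist hκ hη).aestronglyMeasurable 2 (.of_forall fun x => by
      rw [Real.norm_of_nonneg (tvDist_nonneg _ _)]; exact tvDist_le_two _ _)
  suffices ∀ F, MeasurableSet F → (μ.bind κ).real F - (μ.bind η).real F
      ≤ (∫ x, tvDist (κ x) (η x) ∂μ) / 2 by
    linarith [tvDist_le_of_forall_measureReal_sub_le this]
  intro F hF
  have hκF := integrable_measureReal_apply μ hκ hF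
  have hηF := integrable_measureReal_apply μ hη hF
  rw [measureReal_bind μ hκ hF, measureReal_bind μ hη hF, ← integral_sub hκF hηF, ← integral_div]
  exact integral_mono (hκF.sub hηF) (htv.div_const 2) fun x => measureReal_sub_le_half_tvDist _ _ hF

/-- Dobrushin's contraction estimate, with `c / 2` the Dobrushin coefficient of `κ`. -/
lemma tvDist_bind_le_mul (μ ν : Measure X) [IsProbabilityMeasure μ] [IsProbabilityMeasure ν]
    (hκ : Measurable κ) [∀ x, IsProbabilityMeasure (κ x)] {c : ℝ}
    (hc : ∀ x y, tvDist (κ x) (κ y) ≤ c) :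
    tvDist (μ.bind κ) (ν.bind κ) ≤ c / 2 * tvDist μ ν := by
  have := isProbabilityMeasure_bind μ hκ
  have := isProbabilityMeasure_bind ν hκ
  suffices ∀ F, MeasurableSet F → (μ.bind κ).real F - (ν.bind κ).real F
      ≤ c / 2 * (tvDist μ ν / 2) by
    linarith [tvDist_le_of_forall_measureReal_sub_le this]
  intro F hF
  rw [measureReal_bind μ hκ hF, measureReal_bind ν hκ hF]
  exact integral_sub_integral_le_of_oscillation
    ((Measure.measurable_coe hF).comp hκ).ennreal_toReal ⟨0, by rintro _ ⟨x, rfl⟩; positivity⟩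
    fun x y => (measureReal_sub_le_half_tvDist _ _ hF).trans (by linarith [hc x y])

end Bind

section Reweight

/-- The Bayes update `ξ(· g) / ξ(g)`; `filt π0 K g (t + 1)` is definitionally
`reweight (pred π0 K g (t + 1)) (g (t + 1))`. -/
noncomputable def reweight (ξ : Measure X) (g : X → ℝ) : Measure X :=
  let ν : Measure X := ξ.withDensity fun x => ENNReal.ofReal (g x)
  (ν Set.univ)⁻¹ • ν

lemma reweight_eq_zero_or_isProbabilityMeasure (ξ : Measure X) (g : X → ℝ) :
    reweight ξ g = 0 ∨ IsProbabilityMeasure (reweight ξ g) := by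
  set ν : Measure X := ξ.withDensity fun x => ENNReal.ofReal (g x)
  rcases eq_or_ne ν 0 with h0 | h0
  · left; simp [reweight, ν, h0]
  rcases eq_or_ne (ν Set.univ) ∞ with htop | htop
  · left; simp [reweight, ν, htop]
  · have : IsFiniteMeasure ν := ⟨lt_top_iff_ne_top.2 htop⟩
    have : NeZero ν := ⟨h0⟩
    exact .inr isProbabilityMeasureSMul

variable {ξ : Measure X} {g : X → ℝ}

lemma measureReal_reweight (hg : Measurable g) (hg0 : ∀ x, 0 ≤ g x) {F : Set X}
    (hF : MeasurableSet F) : (reweight ξ g).real F = (∫ x in F, g x ∂ξ) / ∫ x, g x ∂ξ := by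
  have hν : ∀ s, MeasurableSet s →
      ((ξ.withDensity fun x => ENNReal.ofReal (g x)) s).toReal = ∫ x in s, g x ∂ξ := fun s hs => by
    rw [withDensity_apply _ hs,
      integral_eq_lintegral_of_nonneg_ae (.of_forall hg0) hg.aestronglyMeasurable]
  rw [reweight, measureReal_def, Measure.smul_apply, smul_eq_mul, ENNReal.toReal_mul,
    ENNReal.toReal_inv, hν _ .univ, hν F hF, Measure.restrict_univ, div_eq_inv_mul]

lemma isProbabilityMeasure_reweight (hg : Measurable g) (hg0 : ∀ x, 0 ≤ g x)
    (hpos : 0 < ∫ x, g x ∂ξ) :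
    IsProbabilityMeasure (reweight ξ g) := by
  refine (reweight_eq_zero_or_isProbabilityMeasure ξ g).resolve_left fun h0 => ?_
  have h := measureReal_reweight (ξ := ξ) hg hg0 MeasurableSet.univ
  rw [h0, Measure.restrict_univ, div_self hpos.ne'] at h
  simp at h

end Reweight

section Perturbation

variable {ξ ξb : Measure X} [IsProbabilityMeasure ξ] [IsProbabilityMeasure ξb] {g gb : X → ℝ}
  {Mg : ℝ}

/-- Normalising both filters by the smaller evidence `ξ(g)` only increases `π̄ - π`, which then
splits into a change of measure for `gb` and the increment `gb - g` under `ξ`. -/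
lemma tvDist_reweight_le (hg : Measurable g) (hgb : Measurable gb) (hg0 : ∀ x, 0 ≤ g x)
    (hggb : ∀ x, g x ≤ gb x) (hMg : ∀ x, gb x ≤ Mg) (hZ : 0 < ∫ x, g x ∂ξ)
    (hle : ∫ x, g x ∂ξ ≤ ∫ x, gb x ∂ξb) :
    tvDist (reweight ξ g) (reweight ξb gb) ≤
      (Mg * tvDist ξ ξb + 2 * ∫ x, (gb x - g x) ∂ξ) / ∫ x, g x ∂ξ := by
  have hgb0 : ∀ x, 0 ≤ gb x := fun x => (hg0 x).trans (hggb x)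
  have hgbi : Integrable gb ξ := .of_bound hgb.aestronglyMeasurable Mg
    (.of_forall fun x => by rw [Real.norm_of_nonneg (hgb0 x)]; exact hMg x)
  have hgi : Integrable g ξ := hgbi.mono' hg.aestronglyMeasurable
    (.of_forall fun x => by rw [Real.norm_of_nonneg (hg0 x)]; exact hggb x)
  have := isProbabilityMeasure_reweight hg hg0 hZ
  have := isProbabilityMeasure_reweight hgb hgb0 (hZ.trans_le hle)
  suffices ∀ F, MeasurableSet F → (reweight ξb gb).real F - (reweight ξ g).real F
      ≤ (Mg * (tvDist ξb ξ / 2) + ∫ x, (gb x - g x) ∂ξ) / ∫ x, g x ∂ξ by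
    rw [tvDist_comm]
    exact (tvDist_le_of_forall_measureReal_sub_le this).trans_eq (by rw [tvDist_comm ξb]; ring)
  intro F hF
  rw [measureReal_reweight hgb hgb0 hF, measureReal_reweight hg hg0 hF]
  have hnorm : (∫ x in F, gb x ∂ξb) / ∫ x, gb x ∂ξb ≤ (∫ x in F, gb x ∂ξb) / ∫ x, g x ∂ξ :=
    div_le_div_of_nonneg_left (setIntegral_nonneg hF fun x _ => hgb0 x) hZ hle
  have hchange : ∫ x in F, gb x ∂ξb - ∫ x in F, gb x ∂ξ ≤ Mg * (tvDist ξb ξ / 2) := by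
    simpa [integral_indicator hF] using integral_sub_integral_le_mul_half_tvDist (μ := ξb)
      (ν := ξ) (hgb.indicator hF) (Set.indicator_nonneg fun x _ => hgb0 x)
      fun x => by by_cases hx : x ∈ F <;> simp [hx, hMg x, (hgb0 x).trans (hMg x)]
  have hincr : ∫ x in F, gb x ∂ξ - ∫ x in F, g x ∂ξ ≤ ∫ x, (gb x - g x) ∂ξ := by
    rw [← integral_sub hgbi.integrableOn hgi.integrableOn]
    exact setIntegral_le_integral (hgbi.sub hgi) (.of_forall fun x => sub_nonneg.2 (hggb x))
  calc (∫ x in F, gb x ∂ξb) / ∫ x, gb x ∂ξb - (∫ x in F, g x ∂ξ) / ∫ x, g x ∂ξ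
      ≤ ((∫ x in F, gb x ∂ξb - ∫ x in F, gb x ∂ξ) + (∫ x in F, gb x ∂ξ - ∫ x in F, g x ∂ξ))
          / ∫ x, g x ∂ξ := by
        rw [add_div, sub_div, sub_div]; linarith
    _ ≤ _ := by gcongr

end Perturbation

lemma tvDist_bind_reweight_le {Y : Type*} [MeasurableSpace Y]
    [MeasurableSpace.CountablyGenerated Y]
    {ξ ξb : Measure X} [IsProbabilityMeasure ξ] [IsProbabilityMeasure ξb] {g gb : X → ℝ} {Mg : ℝ}
    (hg : Measurable g) (hgb : Measurable gb) (hg0 : ∀ x, 0 ≤ g x)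
    (hggb : ∀ x, g x ≤ gb x) (hMg : ∀ x, gb x ≤ Mg) (hZ : 0 < ∫ x, g x ∂ξ)
    (hle : ∫ x, g x ∂ξ ≤ ∫ x, gb x ∂ξb) {K Kb : X → Measure Y} (hK : Measurable K)
    (hKb : Measurable Kb) [∀ x, IsProbabilityMeasure (K x)] [∀ x, IsProbabilityMeasure (Kb x)]
    {c : ℝ} (hc : ∀ x y, tvDist (Kb x) (Kb y) ≤ c) :
    tvDist ((reweight ξ g).bind K) ((reweight ξb gb).bind Kb) ≤
      (c / ∫ x, g x ∂ξ) * Mg * tvDist ξ ξb + (c / ∫ x, g x ∂ξ) * (∫ x, (gb x - g x) ∂ξ) +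
        ∫ x, tvDist (K x) (Kb x) ∂(reweight ξ g) := by
  set π := reweight ξ g
  set πb := reweight ξb gb
  have := isProbabilityMeasure_reweight hg hg0 hZ
  have := isProbabilityMeasure_reweight hgb (fun x => (hg0 x).trans (hggb x)) (hZ.trans_le hle)
  have := isProbabilityMeasure_bind π hK
  have := isProbabilityMeasure_bind π hKb
  have := isProbabilityMeasure_bind πb hKb
  obtain ⟨x⟩ := nonempty_of_isProbabilityMeasure ξ
  have hMg0 : 0 ≤ Mg := ((hg0 x).trans (hggb x)).trans (hMg x)
  have hc0 : 0 ≤ c := (tvDist_nonneg _ _).trans (hc x x)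
  have hfilter := tvDist_reweight_le hg hgb hg0 hggb hMg hZ hle
  have hslack : 0 ≤ (c / ∫ x, g x ∂ξ) * Mg * tvDist ξ ξb := by
    have := tvDist_nonneg ξ ξb
    positivity
  calc tvDist (π.bind K) (πb.bind Kb)
      ≤ tvDist (π.bind K) (π.bind Kb) + tvDist (π.bind Kb) (πb.bind Kb) := tvDist_triangle _ _ _
    _ ≤ ∫ x, tvDist (K x) (Kb x) ∂π + c / 2 * tvDist π πb :=
        add_le_add (tvDist_bind_bind_le_integral π hK hKb) (tvDist_bind_le_mul π πb hKb hc)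
    _ ≤ ∫ x, tvDist (K x) (Kb x) ∂π +
          c / 2 * ((Mg * tvDist ξ ξb + 2 * ∫ x, (gb x - g x) ∂ξ) / ∫ x, g x ∂ξ) := by gcongr
    _ = ∫ x, tvDist (K x) (Kb x) ∂π + (c / ∫ x, g x ∂ξ) * Mg * tvDist ξ ξb / 2 +
          (c / ∫ x, g x ∂ξ) * (∫ x, (gb x - g x) ∂ξ) := by ring
    _ ≤ _ := by linarith

lemma le_supNorm {α : Type*} {f : α → ℝ} {C : ℝ} (hf0 : ∀ x, 0 ≤ f x) (hfC : ∀ x, f x ≤ C)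
    (x : α) : f x ≤ supNorm f := by
  have hbdd : BddAbove (Set.range fun x => |f x|) :=
    ⟨C, by rintro _ ⟨y, rfl⟩; exact (abs_of_nonneg (hf0 y)).trans_le (hfC y)⟩
  exact (abs_of_nonneg (hf0 x)).symm.trans_le (le_ciSup hbdd x)

lemma tvDist_le_dobNorm {K : X → Measure X} [∀ x, IsProbabilityMeasure (K x)] (x y : X) :
    tvDist (K x) (K y) ≤ dobNorm K :=
  le_ciSup (f := fun p : X × X => tvDist (K p.1) (K p.2))
    ⟨2, by rintro _ ⟨p, rfl⟩; exact tvDist_le_two _ _⟩ (x, y)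

lemma measurable_aOf {α : ℕ → X → ℝ → X} (hα : ∀ t γ, Measurable fun x => α t x γ)
    (γseq : ℕ → ℝ) (t : ℕ) : Measurable (aOf α γseq t) := by
  unfold aOf
  split_ifs
  exacts [measurable_id, hα t (γseq t)]

lemma isProbabilityMeasure_pred (π0 : Measure X) [IsProbabilityMeasure π0]
    {K : ℕ → X → Measure X} (hK : ∀ t, Measurable (K t)) [∀ t x, IsProbabilityMeasure (K t x)]
    (g : ℕ → X → ℝ) {t : ℕ} (h : pred π0 K g t ≠ 0) : IsProbabilityMeasure (pred π0 K g t) := by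
  have hfilt : filt π0 K g (t - 1) = 0 ∨ IsProbabilityMeasure (filt π0 K g (t - 1)) := by
    cases t - 1 with
    | zero => exact .inr ‹_›
    | succ n => exact reweight_eq_zero_or_isProbabilityMeasure _ _
  rcases hfilt with h0 | _
  · exact absurd (by rw [pred, h0, Measure.bind_zero_left]) h
  · exact isProbabilityMeasure_bind _ (hK t)

theorem predictive_error_recursion_general
    {d : ℕ}
    (π0 : Measure (EuclideanSpace ℝ (Fin d))) (hπ0 : IsProbabilityMeasure π0)
    (K : ℕ → EuclideanSpace ℝ (Fin d) → Measure (EuclideanSpace ℝ (Fin d)))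
    (hKmeas : ∀ t', Measurable (K t'))
    (hKprob : ∀ t' x, IsProbabilityMeasure (K t' x))
    (g : ℕ → EuclideanSpace ℝ (Fin d) → ℝ)
    (hg0 : ∀ t' x, 0 ≤ g t' x)
    (hgmeas : ∀ t', Measurable (g t'))
    (hgbdd : ∀ t', ∃ C : ℝ, ∀ x, g t' x ≤ C)
    -- `{α_t}` is a family of parametric nudging transformations
    (α : ℕ → EuclideanSpace ℝ (Fin d) → ℝ → EuclideanSpace ℝ (Fin d))
    (hαmeas : ∀ t' γ', Measurable fun x => α t' x γ')
    (Γ : ℕ → ℝ)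
    (hinc : ∀ t' x, ∀ γ' ∈ Set.Icc (0 : ℝ) (Γ t'), g t' x ≤ g t' (α t' x γ'))
    -- the nudging parameters used to build the alternative nudged model
    (γseq : ℕ → ℝ) (hγseq : ∀ t', γseq t' ∈ Set.Icc (0 : ℝ) (Γ t'))
    (t : ℕ) (ht : 1 ≤ t)
    (hpos : 0 < ∫ x, g t x ∂(pred π0 K g t))
    -- the hypothesis `ξ_t(g_t) ≤ ξ̄_t^α(g_t^α)`
    (hle : ∫ x, g t x ∂(pred π0 K g t) ≤
        ∫ x, g t (α t x (γseq t))
          ∂(pred π0 (altKernel K (aOf α γseq)) (altG g (aOf α γseq)) t)) :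
    tvDist (pred π0 K g (t + 1))
        (pred π0 (altKernel K (aOf α γseq)) (altG g (aOf α γseq)) (t + 1)) ≤
      (dobNorm (K (t + 1)) / ∫ x, g t x ∂(pred π0 K g t)) * supNorm (g t) *
          tvDist (pred π0 K g t)
            (pred π0 (altKernel K (aOf α γseq)) (altG g (aOf α γseq)) t) +
        (dobNorm (K (t + 1)) / ∫ x, g t x ∂(pred π0 K g t)) *
          (∫ x, (g t (α t x (γseq t)) - g t x) ∂(pred π0 K g t)) +
        ∫ x, tvDist (K (t + 1) x) (K (t + 1) (α t x (γseq t))) ∂(filt π0 K g t) := by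
  obtain ⟨s, rfl⟩ : ∃ s, t = s + 1 := ⟨t - 1, by omega⟩
  have : ∀ t x, IsProbabilityMeasure (altKernel K (aOf α γseq) t x) := fun t x => hKprob t _
  have hξ := isProbabilityMeasure_pred π0 hKmeas g (t := s + 1) fun h => by simp [h] at hpos
  have hξb := isProbabilityMeasure_pred π0 (K := altKernel K (aOf α γseq))
    (fun t => (hKmeas t).comp (measurable_aOf hαmeas γseq (t - 1))) (altG g (aOf α γseq))
    (t := s + 1) fun h => by simp [h] at hle; linarith
  obtain ⟨C, hC⟩ := hgbdd (s + 1)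
  have hαs := hαmeas (s + 1) (γseq (s + 1))
  -- both predictive measures at `s + 2` unfold to `reweight … |>.bind …`, and `aOf α γseq (s + 1)`
  -- to `α (s + 1) · (γseq (s + 1))`
  exact tvDist_bind_reweight_le (gb := fun x => g (s + 1) (α (s + 1) x (γseq (s + 1))))
    (Kb := fun x => K (s + 2) (α (s + 1) x (γseq (s + 1)))) (hgmeas _) ((hgmeas _).comp hαs)
    (hg0 _) (fun x => hinc _ x _ (hγseq _)) (fun x => le_supNorm (hg0 _) hC _) hpos hle
    (hKmeas _) ((hKmeas _).comp hαs) fun x y => tvDist_le_dobNorm (K := K (s + 2)) _ _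

/-- **Lemma (one-step recursion for the predictive error).**
If `ξ_t(g_t) ≤ ξ̄_t^α(g_t^α)`, then
`‖ξ_{t+1} - ξ̄_{t+1}^α‖_TV ≤ b_t ‖ξ_t - ξ̄_t^α‖_TV + a_t Δ_{g_t}(γ) + Δ_{K_{t+1}}(γ)`,
where `a_t = ‖K_{t+1}‖_{𝒟_𝒳}/ξ_t(g_t)` and `b_t = a_t ‖g_t‖_∞`. -/
theorem predictive_error_recursion
    {d : ℕ}
    (π0 : Measure (EuclideanSpace ℝ (Fin d))) (hπ0 : IsProbabilityMeasure π0)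
    (K : ℕ → EuclideanSpace ℝ (Fin d) → Measure (EuclideanSpace ℝ (Fin d)))
    (hKmeas : ∀ t', Measurable (K t'))
    (hKprob : ∀ t' x, IsProbabilityMeasure (K t' x))
    (g : ℕ → EuclideanSpace ℝ (Fin d) → ℝ)
    (hg0 : ∀ t' x, 0 ≤ g t' x)
    (hgmeas : ∀ t', Measurable (g t'))
    (hgbdd : ∀ t', ∃ C : ℝ, ∀ x, g t' x ≤ C)
    -- `{α_t}` is a family of parametric nudging transformations
    (α : ℕ → EuclideanSpace ℝ (Fin d) → ℝ → EuclideanSpace ℝ (Fin d))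
    (hαmeas : ∀ t' γ', Measurable fun x => α t' x γ')
    (hαcont : ∀ t' x, ContinuousOn (fun γ' => α t' x γ') (Set.Ici 0))
    (hα0 : ∀ t' x, α t' x 0 = x)
    (Γ : ℕ → ℝ) (hΓ : ∀ t', 0 < Γ t')
    (hinc : ∀ t' x, ∀ γ' ∈ Set.Icc (0 : ℝ) (Γ t'), g t' x ≤ g t' (α t' x γ'))
    (hΔpos : ∀ t', ∀ γ' ∈ Set.Ioc (0 : ℝ) (Γ t'),
        0 < ∫ x, (g t' (α t' x γ') - g t' x) ∂(pred π0 K g t'))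
    -- the nudging parameters used to build the alternative nudged model
    (γseq : ℕ → ℝ) (hγseq : ∀ t', γseq t' ∈ Set.Icc (0 : ℝ) (Γ t'))
    (t : ℕ) (ht : 1 ≤ t)
    (hpos : 0 < ∫ x, g t x ∂(pred π0 K g t))
    -- the hypothesis `ξ_t(g_t) ≤ ξ̄_t^α(g_t^α)`
    (hle : ∫ x, g t x ∂(pred π0 K g t) ≤
        ∫ x, g t (α t x (γseq t))
          ∂(pred π0 (altKernel K (aOf α γseq)) (altG g (aOf α γseq)) t)) :
    tvDist (pred π0 K g (t + 1))
        (pred π0 (altKernel K (aOf α γseq)) (altG g (aOf α γseq)) (t + 1)) ≤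
      (dobNorm (K (t + 1)) / ∫ x, g t x ∂(pred π0 K g t)) * supNorm (g t) *
          tvDist (pred π0 K g t)
            (pred π0 (altKernel K (aOf α γseq)) (altG g (aOf α γseq)) t) +
        (dobNorm (K (t + 1)) / ∫ x, g t x ∂(pred π0 K g t)) *
          (∫ x, (g t (α t x (γseq t)) - g t x) ∂(pred π0 K g t)) +
        ∫ x, tvDist (K (t + 1) x) (K (t + 1) (α t x (γseq t))) ∂(filt π0 K g t) :=
  predictive_error_recursion_general π0 hπ0 K hKmeas hKprob g hg0 hgmeas hgbdd α hαmeas Γ hinc γseq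
    hγseq t ht hpos hle

end Nudging
end
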